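/- In the deterministic setting where each x_i ∈ {−1,0,1}ⁿ and ‖U‖ ≤ 2 (spectral norm), the function L(h) = −(1/(4N)) Σ_{i=1}^N ‖C_{x_i}Uh‖₄⁴ satisfies, for all h ∈ Sⁿ⁻¹: −4n³ ≤ L(h) ≤ 0, ‖∇L(h)‖ ≤ 16n³, and ‖H_L(h)‖ ≤ 48n³, where ∇L and H_L are the Euclidean gradient and Hessian. -/

import Mathlib

set_option maxHeartbeats 1000000
set_option synthInstance.maxHeartbeats 400000


open Matrix MeasureTheory ProbabilityTheory Finset Filter

noncomputable section

/-- The Euclidean (`ℓ²`) norm of a vector in `Fin n → ℝ`. -/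
def enorm2 {n : ℕ} (v : Fin n → ℝ) : ℝ := Real.sqrt (∑ j, v j ^ 2)

/-- The spectral norm (ℓ² operator norm) of a square real matrix. -/
def spec {n : ℕ} (A : Matrix (Fin n) (Fin n) ℝ) : ℝ := ‖Matrix.toEuclideanCLM (𝕜 := ℝ) A‖

/-- The Euclidean gradient of `F : ℝⁿ → ℝ`, given by the partial derivatives. -/
def egrad {n : ℕ} (F : (Fin n → ℝ) → ℝ) (h : Fin n → ℝ) : Fin n → ℝ :=
  fun j => fderiv ℝ F h (Pi.single j 1)

/-- The Euclidean Hessian of `F : ℝⁿ → ℝ`, given by the second partial derivatives. -/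
def ehess {n : ℕ} (F : (Fin n → ℝ) → ℝ) (h : Fin n → ℝ) : Matrix (Fin n) (Fin n) ℝ :=
  Matrix.of fun j k => fderiv ℝ (fun v => fderiv ℝ F v (Pi.single j 1)) h (Pi.single k 1)

/-- Projection `P_{h⊥} = I - h hᵀ` onto the tangent space of the unit sphere at `h`. -/
def Pperp {n : ℕ} (h : Fin n → ℝ) : Matrix (Fin n) (Fin n) ℝ := 1 - Matrix.vecMulVec h h

/-- Riemannian gradient `∇̂F(h) = P_{h⊥} ∇F(h)`. -/
def rgrad {n : ℕ} (F : (Fin n → ℝ) → ℝ) (h : Fin n → ℝ) : Fin n → ℝ :=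
  (Pperp h).mulVec (egrad F h)

/-- Riemannian Hessian `ĤF(h) = P_{h⊥} H_F(h) P_{h⊥} - ⟨∇F(h), h⟩ P_{h⊥}`. -/
def rhess {n : ℕ} (F : (Fin n → ℝ) → ℝ) (h : Fin n → ℝ) : Matrix (Fin n) (Fin n) ℝ :=
  Pperp h * ehess F h * Pperp h - (egrad F h ⬝ᵥ h) • Pperp h

/-- The unit sphere `S^{n-1} ⊆ ℝⁿ`. -/
def usph (n : ℕ) : Set (Fin n → ℝ) := {h | enorm2 h = 1}

/-- The objective `L(h) = -(1/(4N)) ∑_i ‖C_{x_i} U h‖₄⁴`. -/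
def Lobj {n N : ℕ} (x : Fin N → Fin n → ℝ) (U : Matrix (Fin n) (Fin n) ℝ)
    (h : Fin n → ℝ) : ℝ :=
  -(1 / (4 * (N : ℝ))) * ∑ i, ∑ j, ((Matrix.circulant (x i) * U).mulVec h j) ^ 4

/-- Manifold gradient descent iterates. -/
def mgdIter {n : ℕ} (F : (Fin n → ℝ) → ℝ) (γ : ℝ) (h0 : Fin n → ℝ) : ℕ → Fin n → ℝ
  | 0 => h0
  | t + 1 =>
    let w := mgdIter F γ h0 t - γ • rgrad F (mgdIter F γ h0 t)
    (enorm2 w)⁻¹ • w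

/-- `h₀` is a stationary point with `r` nonzero entries: each nonzero entry equals `±1/√r`. -/
def IsStatPoint {n : ℕ} (h₀ : Fin n → ℝ) (r : ℕ) : Prop :=
  (∀ j, h₀ j = 0 ∨ h₀ j = 1 / Real.sqrt r ∨ h₀ j = -(1 / Real.sqrt r)) ∧
  (Finset.univ.filter fun j => h₀ j ≠ 0).card = r

/-- `h` is in the `(ρ,r)`-neighborhood of `h₀`. -/
def nbhd {n : ℕ} (ρ : ℝ) (r : ℕ) (h₀ h : Fin n → ℝ) : Prop :=
  ∀ j, |h j ^ 2 - h₀ j ^ 2| ≤ ρ / r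

def H1'' (n : ℕ) (ρ : ℝ) : Set (Fin n → ℝ) :=
  {h | enorm2 h = 1 ∧ ∃ h₀, IsStatPoint h₀ 1 ∧ nbhd ρ 1 h₀ h}

def H2'' (n : ℕ) (ρ : ℝ) : Set (Fin n → ℝ) :=
  {h | enorm2 h = 1 ∧ ∃ r h₀, 1 < r ∧ IsStatPoint h₀ r ∧ nbhd ρ r h₀ h}

def H3'' (n : ℕ) (ρ : ℝ) : Set (Fin n → ℝ) := usph n \ (H1'' n ρ ∪ H2'' n ρ)

/-- Symmetric positive semidefinite square root (junk value `0` off the PSD cone). -/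
def matSqrt {n : ℕ} (Q : Matrix (Fin n) (Fin n) ℝ) : Matrix (Fin n) (Fin n) ℝ :=
  letI := Classical.dec Q.PosSemidef
  if hQ : Q.PosSemidef then
    (hQ.1.eigenvectorUnitary : Matrix (Fin n) (Fin n) ℝ) *
      Matrix.diagonal (fun i => Real.sqrt (hQ.1.eigenvalues i)) *
      (star hQ.1.eigenvectorUnitary : Matrix (Fin n) (Fin n) ℝ) else 0

/-- Inverse of the symmetric positive definite square root. -/
def matInvSqrt {n : ℕ} (Q : Matrix (Fin n) (Fin n) ℝ) : Matrix (Fin n) (Fin n) ℝ :=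
  (matSqrt Q)⁻¹

/-- The rotation `(C_fᵀ C_f)^{1/2} C_f⁻¹`. -/
def rotMat {n : ℕ} (f : Fin n → ℝ) : Matrix (Fin n) (Fin n) ℝ :=
  matSqrt ((Matrix.circulant f)ᵀ * Matrix.circulant f) * (Matrix.circulant f)⁻¹

def H1set {n : ℕ} (f : Fin n → ℝ) (ρ : ℝ) : Set (Fin n → ℝ) :=
  (fun h => (rotMat f).mulVec h) '' H1'' n ρ

def H2set {n : ℕ} (f : Fin n → ℝ) (ρ : ℝ) : Set (Fin n → ℝ) :=
  (fun h => (rotMat f).mulVec h) '' H2'' n ρ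

def H3set {n : ℕ} (f : Fin n → ℝ) (ρ : ℝ) : Set (Fin n → ℝ) :=
  (fun h => (rotMat f).mulVec h) '' H3'' n ρ

/-- The `n`-point DFT of a real vector. -/
def dftv {n : ℕ} (f : Fin n → ℝ) : Fin n → ℂ :=
  fun j => ∑ k, (f k : ℂ) *
    Complex.exp (-2 * Real.pi * Complex.I * (j : ℕ) * (k : ℕ) / n)

/-- The inverse `n`-point DFT. -/
def idftv {n : ℕ} (v : Fin n → ℂ) : Fin n → ℂ :=
  fun k => (n : ℂ)⁻¹ * ∑ j, v j *
    Complex.exp (2 * Real.pi * Complex.I * (j : ℕ) * (k : ℕ) / n)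

/-- The condition number `κ = max_j |𝓕f_j| / min_k |𝓕f_k|`. -/
def condNum {n : ℕ} (f : Fin n → ℝ) : ℝ :=
  (⨆ j, ‖dftv f j‖) / (⨅ j, ‖dftv f j‖)

/-- The Bernoulli–Rademacher distribution on ℝ with parameter θ. -/
def bernRad (θ : ℝ) : Measure ℝ :=
  ENNReal.ofReal (θ / 2) • Measure.dirac 1 + ENNReal.ofReal (θ / 2) • Measure.dirac (-1) +
    ENNReal.ofReal (1 - θ) • Measure.dirac 0

/-- The matrix `(1/(θnN)) ∑ᵢ C_{yᵢ}ᵀ C_{yᵢ}`. -/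
def Qmat {n N : ℕ} (θ : ℝ) (y : Fin N → Fin n → ℝ) : Matrix (Fin n) (Fin n) ℝ :=
  (1 / (θ * n * N)) • ∑ i, (Matrix.circulant (y i))ᵀ * Matrix.circulant (y i)

/-- The preconditioner `R = ((1/(θnN)) ∑ᵢ C_{yᵢ}ᵀ C_{yᵢ})^{-1/2}`. -/
def Rmat {n N : ℕ} (θ : ℝ) (y : Fin N → Fin n → ℝ) : Matrix (Fin n) (Fin n) ℝ :=
  matInvSqrt (Qmat θ y)


section Stmt8Helpers

variable {n : ℕ}

lemma enorm2_eq_norm (v : Fin n → ℝ) :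
    enorm2 v = ‖(WithLp.equiv 2 (Fin n → ℝ)).symm v‖ := by
  rw [EuclideanSpace.norm_eq]
  unfold enorm2
  congr 1
  refine Finset.sum_congr rfl fun j _ => ?_
  show v j ^ 2 = ‖v j‖ ^ 2
  rw [Real.norm_eq_abs, sq_abs]

lemma mulVec_enorm_le (A : Matrix (Fin n) (Fin n) ℝ) (v : Fin n → ℝ) :
    enorm2 (A.mulVec v) ≤ spec A * enorm2 v := by
  have h := (Matrix.toEuclideanCLM (𝕜 := ℝ) A).le_opNorm ((WithLp.equiv 2 (Fin n → ℝ)).symm v)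
  rw [enorm2_eq_norm, enorm2_eq_norm]
  exact h

lemma spec_mul_le (A B : Matrix (Fin n) (Fin n) ℝ) : spec (A * B) ≤ spec A * spec B := by
  unfold spec; rw [_root_.map_mul]; exact ContinuousLinearMap.opNorm_comp_le _ _

lemma spec_transpose (A : Matrix (Fin n) (Fin n) ℝ) : spec Aᵀ = spec A := by
  have hst : Aᵀ = star A := by
    ext i j
    simp [Matrix.star_eq_conjTranspose, Matrix.conjTranspose_apply]
  rw [hst]; unfold spec; rw [map_star, ContinuousLinearMap.star_eq_adjoint]
  exact (ContinuousLinearMap.adjoint : (EuclideanSpace ℝ (Fin n) →L[ℝ] EuclideanSpace ℝ (Fin n)) ≃ₗᵢ⋆[ℝ] _).norm_map _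

lemma spec_smul (c : ℝ) (A : Matrix (Fin n) (Fin n) ℝ) : spec (c • A) = |c| * spec A := by
  unfold spec; rw [_root_.map_smul]
  rw [norm_smul c (Matrix.toEuclideanCLM (𝕜 := ℝ) A), Real.norm_eq_abs]

lemma spec_sum_le {ι : Type*} (s : Finset ι) (M : ι → Matrix (Fin n) (Fin n) ℝ) :
    spec (∑ i ∈ s, M i) ≤ ∑ i ∈ s, spec (M i) := by
  unfold spec; rw [_root_.map_sum]; exact norm_sum_le _ _

lemma spec_le_of_bound (A : Matrix (Fin n) (Fin n) ℝ) (c : ℝ) (hc : 0 ≤ c)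
    (H : ∀ v, enorm2 (A.mulVec v) ≤ c * enorm2 v) : spec A ≤ c := by
  refine ContinuousLinearMap.opNorm_le_bound _ hc fun x => ?_
  have h := H (WithLp.equiv 2 (Fin n → ℝ) x)
  rw [enorm2_eq_norm, enorm2_eq_norm] at h
  exact h

lemma enorm2_nonneg (v : Fin n → ℝ) : 0 ≤ enorm2 v := Real.sqrt_nonneg _

lemma enorm2_sq (v : Fin n → ℝ) : enorm2 v ^ 2 = ∑ j, v j ^ 2 := by
  unfold enorm2
  exact Real.sq_sqrt (Finset.sum_nonneg fun j _ => sq_nonneg _)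

lemma enorm2_le_of_sq (v : Fin n → ℝ) (a : ℝ) (ha : 0 ≤ a) (H : ∑ j, v j ^ 2 ≤ a ^ 2) :
    enorm2 v ≤ a := by
  unfold enorm2
  calc Real.sqrt (∑ j, v j ^ 2) ≤ Real.sqrt (a ^ 2) := Real.sqrt_le_sqrt H
  _ = a := by rw [Real.sqrt_sq ha]

lemma sq_le_enorm2_smul (v : Fin n → ℝ) (a : ℝ) (H : enorm2 v ≤ a) : ∑ j, v j ^ 2 ≤ a ^ 2 := by
  rw [← enorm2_sq]
  exact pow_le_pow_left₀ (enorm2_nonneg v) H 2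

lemma enorm2_smul (c : ℝ) (v : Fin n → ℝ) : enorm2 (c • v) = |c| * enorm2 v := by
  rw [enorm2_eq_norm, enorm2_eq_norm]
  have : (WithLp.equiv 2 (Fin n → ℝ)).symm (c • v) = c • (WithLp.equiv 2 (Fin n → ℝ)).symm v := rfl
  rw [this, norm_smul, Real.norm_eq_abs]

lemma enorm2_sum_le {ι : Type*} (s : Finset ι) (f : ι → Fin n → ℝ) :
    enorm2 (∑ i ∈ s, f i) ≤ ∑ i ∈ s, enorm2 (f i) := by
  simp only [enorm2_eq_norm]
  have : (WithLp.equiv 2 (Fin n → ℝ)).symm (∑ i ∈ s, f i)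
      = ∑ i ∈ s, (WithLp.equiv 2 (Fin n → ℝ)).symm (f i) :=
    map_sum (WithLp.addEquiv 2 (Fin n → ℝ)).symm f s
  rw [this]
  exact norm_sum_le _ _

lemma spec_frob_le (A : Matrix (Fin n) (Fin n) ℝ) (c : ℝ) (hc : 0 ≤ c)
    (H : ∑ j, ∑ k, A j k ^ 2 ≤ c ^ 2) : spec A ≤ c := by
  refine spec_le_of_bound A c hc fun v => ?_
  have hvsq : 0 ≤ ∑ j, v j ^ 2 := Finset.sum_nonneg fun j _ => sq_nonneg _
  refine enorm2_le_of_sq _ _ (mul_nonneg hc (enorm2_nonneg v)) ?_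
  have key : ∀ j, (A.mulVec v j) ^ 2 ≤ (∑ k, A j k ^ 2) * ∑ k, v k ^ 2 := fun j =>
    Finset.sum_mul_sq_le_sq_mul_sq Finset.univ (fun k => A j k) v
  calc ∑ j, (A.mulVec v j) ^ 2 ≤ ∑ j, (∑ k, A j k ^ 2) * ∑ k, v k ^ 2 :=
        Finset.sum_le_sum fun j _ => key j
    _ = (∑ j, ∑ k, A j k ^ 2) * ∑ k, v k ^ 2 := by rw [Finset.sum_mul]
    _ ≤ c ^ 2 * ∑ k, v k ^ 2 := by
        exact mul_le_mul_of_nonneg_right H hvsq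
    _ = (c * enorm2 v) ^ 2 := by rw [mul_pow, enorm2_sq]

lemma spec_diagonal_le (d : Fin n → ℝ) (c : ℝ) (hc : 0 ≤ c) (H : ∀ j, d j ^ 2 ≤ c ^ 2) :
    spec (Matrix.diagonal d) ≤ c := by
  refine spec_le_of_bound _ c hc fun v => ?_
  refine enorm2_le_of_sq _ _ (mul_nonneg hc (enorm2_nonneg v)) ?_
  have : ∀ j, ((Matrix.diagonal d).mulVec v j) ^ 2 = d j ^ 2 * v j ^ 2 := by
    intro j
    rw [Matrix.mulVec_diagonal]
    ring
  calc ∑ j, ((Matrix.diagonal d).mulVec v j) ^ 2 = ∑ j, d j ^ 2 * v j ^ 2 := by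
        exact Finset.sum_congr rfl fun j _ => this j
    _ ≤ ∑ j, c ^ 2 * v j ^ 2 :=
        Finset.sum_le_sum fun j _ => mul_le_mul_of_nonneg_right (H j) (sq_nonneg _)
    _ = (c * enorm2 v) ^ 2 := by rw [← Finset.mul_sum, mul_pow, enorm2_sq]

def rowCLM {n : ℕ} (B : Matrix (Fin n) (Fin n) ℝ) (j : Fin n) : (Fin n → ℝ) →L[ℝ] ℝ :=
  LinearMap.toContinuousLinearMap ((LinearMap.proj j).comp (Matrix.mulVecLin B))

lemma rowCLM_apply {n : ℕ} (B : Matrix (Fin n) (Fin n) ℝ) (j : Fin n) (w : Fin n → ℝ) :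
    rowCLM B j w = B.mulVec w j := rfl

variable {N : ℕ}

lemma hasFDerivAt_Lobj (x : Fin N → Fin n → ℝ) (U : Matrix (Fin n) (Fin n) ℝ) (h : Fin n → ℝ) :
    HasFDerivAt (Lobj x U)
      ((-(1 / (4 * (N : ℝ)))) • ∑ i, ∑ j,
        ((4 : ℝ) * ((Matrix.circulant (x i) * U).mulVec h j) ^ 3) •
          rowCLM (Matrix.circulant (x i) * U) j) h := by
  have base : ∀ (B : Matrix (Fin n) (Fin n) ℝ) (j : Fin n),
      HasFDerivAt (fun u => B.mulVec u j) (rowCLM B j) h := fun B j =>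
    (rowCLM B j).hasFDerivAt
  have pow4 : ∀ (B : Matrix (Fin n) (Fin n) ℝ) (j : Fin n),
      HasFDerivAt (fun u => (B.mulVec u j) ^ 4)
        (((4 : ℝ) * (B.mulVec h j) ^ 3) • rowCLM B j) h := by
    intro B j
    have h1 := (hasDerivAt_pow 4 (B.mulVec h j)).comp_hasFDerivAt h (base B j)
    norm_num at h1
    exact h1
  have sums : HasFDerivAt
      (fun u => ∑ i, ∑ j, ((Matrix.circulant (x i) * U).mulVec u j) ^ 4)
      (∑ i, ∑ j, ((4 : ℝ) * ((Matrix.circulant (x i) * U).mulVec h j) ^ 3) •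
          rowCLM (Matrix.circulant (x i) * U) j) h :=
    HasFDerivAt.fun_sum fun i _ => HasFDerivAt.fun_sum fun j _ => pow4 _ j
  exact sums.const_mul _

lemma egrad_Lobj (x : Fin N → Fin n → ℝ) (U : Matrix (Fin n) (Fin n) ℝ) (h : Fin n → ℝ) :
    egrad (Lobj x U) h = ∑ i, (-(1 / (N : ℝ))) •
      (Matrix.circulant (x i) * U)ᵀ.mulVec
        (fun j => ((Matrix.circulant (x i) * U).mulVec h j) ^ 3) := by
  funext j'
  unfold egrad
  rw [(hasFDerivAt_Lobj x U h).fderiv]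
  simp only [ContinuousLinearMap.smul_apply, ContinuousLinearMap.sum_apply,
    ContinuousLinearMap.coe_smul', Pi.smul_apply, rowCLM_apply, Matrix.mulVec_single_one, Matrix.col_apply,
    Finset.sum_apply, smul_eq_mul, mul_one]
  rw [Finset.mul_sum]
  refine Finset.sum_congr rfl fun i _ => ?_
  simp only [Matrix.mulVec, dotProduct, Matrix.transpose_apply, Finset.mul_sum]
  refine Finset.sum_congr rfl fun j _ => ?_
  have h4 : (4 * (N : ℝ))⁻¹ * 4 = (N : ℝ)⁻¹ := by rw [mul_inv]; ring
  simp only [one_div]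
  linear_combination (((Matrix.circulant (x i) * U).mulVec h j) ^ 3 *
    ((Matrix.circulant (x i) * U) j j')) * h4

lemma fderiv_apply_eq (x : Fin N → Fin n → ℝ) (U : Matrix (Fin n) (Fin n) ℝ) (j : Fin n) :
    (fun w => fderiv ℝ (Lobj x U) w (Pi.single j 1)) =
    fun w => -(1 / (4 * (N : ℝ))) * ∑ i, ∑ m,
      ((4 : ℝ) * (Matrix.circulant (x i) * U) m j) *
        ((Matrix.circulant (x i) * U).mulVec w m) ^ 3 := by
  funext w
  rw [(hasFDerivAt_Lobj x U w).fderiv]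
  simp only [ContinuousLinearMap.smul_apply, ContinuousLinearMap.sum_apply,
    rowCLM_apply, Matrix.mulVec_single_one, Matrix.col_apply, smul_eq_mul, mul_one]
  congr 1
  refine Finset.sum_congr rfl fun i _ => Finset.sum_congr rfl fun m _ => by ring

lemma hasFDerivAt_G (x : Fin N → Fin n → ℝ) (U : Matrix (Fin n) (Fin n) ℝ) (j : Fin n)
    (h : Fin n → ℝ) :
    HasFDerivAt (fun w => -(1 / (4 * (N : ℝ))) * ∑ i, ∑ m,
        ((4 : ℝ) * (Matrix.circulant (x i) * U) m j) *
          ((Matrix.circulant (x i) * U).mulVec w m) ^ 3)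
      ((-(1 / (4 * (N : ℝ)))) • ∑ i, ∑ m,
        ((4 : ℝ) * (Matrix.circulant (x i) * U) m j) •
          (((3 : ℝ) * ((Matrix.circulant (x i) * U).mulVec h m) ^ 2) •
            rowCLM (Matrix.circulant (x i) * U) m)) h := by
  have base : ∀ (B : Matrix (Fin n) (Fin n) ℝ) (m : Fin n),
      HasFDerivAt (fun u => B.mulVec u m) (rowCLM B m) h := fun B m =>
    (rowCLM B m).hasFDerivAt
  have pow3 : ∀ (B : Matrix (Fin n) (Fin n) ℝ) (m : Fin n),
      HasFDerivAt (fun u => (B.mulVec u m) ^ 3)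
        (((3 : ℝ) * (B.mulVec h m) ^ 2) • rowCLM B m) h := by
    intro B m
    have h1 := (hasDerivAt_pow 3 (B.mulVec h m)).comp_hasFDerivAt h (base B m)
    norm_num at h1
    exact h1
  have sums : HasFDerivAt (fun w => ∑ i, ∑ m,
        ((4 : ℝ) * (Matrix.circulant (x i) * U) m j) *
          ((Matrix.circulant (x i) * U).mulVec w m) ^ 3)
      (∑ i, ∑ m, ((4 : ℝ) * (Matrix.circulant (x i) * U) m j) •
          (((3 : ℝ) * ((Matrix.circulant (x i) * U).mulVec h m) ^ 2) •
            rowCLM (Matrix.circulant (x i) * U) m)) h :=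
    HasFDerivAt.fun_sum fun i _ => HasFDerivAt.fun_sum fun m _ => (pow3 _ m).const_mul _
  exact sums.const_mul _

lemma ehess_Lobj (x : Fin N → Fin n → ℝ) (U : Matrix (Fin n) (Fin n) ℝ) (h : Fin n → ℝ) :
    ehess (Lobj x U) h = (-(3 / (N : ℝ))) • ∑ i,
      (Matrix.circulant (x i) * U)ᵀ *
        Matrix.diagonal (fun m => ((Matrix.circulant (x i) * U).mulVec h m) ^ 2) *
        (Matrix.circulant (x i) * U) := by
  ext j k
  have hentry : ∀ i : Fin N,
      ((Matrix.circulant (x i) * U)ᵀ *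
        Matrix.diagonal (fun m => ((Matrix.circulant (x i) * U).mulVec h m) ^ 2) *
        (Matrix.circulant (x i) * U)) j k
      = ∑ m, (Matrix.circulant (x i) * U) m j *
          ((Matrix.circulant (x i) * U).mulVec h m) ^ 2 * (Matrix.circulant (x i) * U) m k := by
    intro i
    rw [Matrix.mul_apply]
    refine Finset.sum_congr rfl fun m _ => ?_
    rw [Matrix.mul_diagonal, Matrix.transpose_apply]
  show fderiv ℝ (fun v => fderiv ℝ (Lobj x U) v (Pi.single j 1)) h (Pi.single k 1) = _
  rw [fderiv_apply_eq x U j, (hasFDerivAt_G x U j h).fderiv]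
  simp only [ContinuousLinearMap.smul_apply, ContinuousLinearMap.sum_apply,
    rowCLM_apply, Matrix.mulVec_single_one, Matrix.col_apply, smul_eq_mul, mul_one,
    Matrix.smul_apply, Matrix.sum_apply]
  rw [Finset.mul_sum, Finset.mul_sum]
  simp only [hentry]
  refine Finset.sum_congr rfl fun i _ => ?_
  rw [Finset.mul_sum, Finset.mul_sum]
  refine Finset.sum_congr rfl fun m _ => ?_
  have h12 : (4 * (N : ℝ))⁻¹ * 12 = 3 * (N : ℝ)⁻¹ := by rw [mul_inv]; ring
  simp only [one_div]
  linear_combination ((Matrix.circulant (x i) * U) m j * (Matrix.circulant (x i) * U) m k *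
    ((Matrix.circulant (x i) * U).mulVec h m) ^ 2) * h12

lemma spec_nonneg (A : Matrix (Fin n) (Fin n) ℝ) : 0 ≤ spec A := norm_nonneg _

end Stmt8Helpers

/-- Lemma 5: bounds on the objective, its gradient and its Hessian. -/
theorem stmt8 {n N : ℕ} (hn : 0 < n) (hN : 0 < N)
    (x : Fin N → Fin n → ℝ) (hx : ∀ i j, x i j = -1 ∨ x i j = 0 ∨ x i j = 1)
    (U : Matrix (Fin n) (Fin n) ℝ) (hU : spec U ≤ 2)
    (h : Fin n → ℝ) (hh : h ∈ usph n) :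
    (-(4 * (n : ℝ) ^ 3) ≤ Lobj x U h ∧ Lobj x U h ≤ 0) ∧
      enorm2 (egrad (Lobj x U) h) ≤ 16 * (n : ℝ) ^ 3 ∧
      spec (ehess (Lobj x U) h) ≤ 48 * (n : ℝ) ^ 3 := by
  have hn0 : (0:ℝ) < n := by exact_mod_cast hn
  have hN0 : (0:ℝ) < N := by exact_mod_cast hN
  have hNne : (N:ℝ) ≠ 0 := ne_of_gt hN0
  set A : Fin N → Matrix (Fin n) (Fin n) ℝ := fun i => Matrix.circulant (x i) * U with hA
  set v : Fin N → Fin n → ℝ := fun i => (A i).mulVec h with hv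
  have hh1 : enorm2 h = 1 := hh
  have hsumh : ∑ j, h j ^ 2 = 1 := by
    rw [← enorm2_sq, hh1]; norm_num
  have hxsq : ∀ i (j k : Fin n), (Matrix.circulant (x i)) j k ^ 2 ≤ 1 := by
    intro i j k
    rw [Matrix.circulant_apply]
    rcases hx i (j - k) with h1 | h1 | h1 <;> rw [h1] <;> norm_num
  have spec_circ : ∀ i, spec (Matrix.circulant (x i)) ≤ n := by
    intro i
    refine spec_frob_le _ _ (le_of_lt hn0) ?_
    calc ∑ j, ∑ k, (Matrix.circulant (x i)) j k ^ 2 ≤ ∑ j : Fin n, ∑ k : Fin n, (1:ℝ) :=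
          Finset.sum_le_sum fun j _ => Finset.sum_le_sum fun k _ => hxsq i j k
      _ = (n:ℝ) ^ 2 := by simp [Finset.sum_const]; ring
  have specA : ∀ i, spec (A i) ≤ 2 * n := by
    intro i
    refine le_trans (spec_mul_le _ _) ?_
    calc spec (Matrix.circulant (x i)) * spec U ≤ (n:ℝ) * 2 :=
          mul_le_mul (spec_circ i) hU (spec_nonneg _) (le_of_lt hn0)
      _ = 2 * n := by ring
  have specAT : ∀ i, spec (A i)ᵀ ≤ 2 * n := fun i => by rw [spec_transpose]; exact specA i
  -- row bound
  have hrow : ∀ i (m : Fin n), ∑ k, (A i) m k ^ 2 ≤ 4 * n := by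
    intro i m
    have hrw : ∀ k, (A i) m k = Uᵀ.mulVec (fun l => Matrix.circulant (x i) m l) k := by
      intro k
      rw [hA]
      simp only [Matrix.mul_apply, Matrix.mulVec, dotProduct, Matrix.transpose_apply]
      exact Finset.sum_congr rfl fun l _ => by ring
    have hw : enorm2 (fun l => Matrix.circulant (x i) m l) ^ 2 ≤ (n:ℝ) := by
      rw [enorm2_sq]
      calc ∑ l, (Matrix.circulant (x i)) m l ^ 2 ≤ ∑ _l : Fin n, (1:ℝ) :=
            Finset.sum_le_sum fun l _ => hxsq i m l
        _ = (n:ℝ) := by simp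
    have hmv := mulVec_enorm_le Uᵀ (fun l => Matrix.circulant (x i) m l)
    have hUT : spec Uᵀ ≤ 2 := by rw [spec_transpose]; exact hU
    calc ∑ k, (A i) m k ^ 2
        = ∑ k, (Uᵀ.mulVec (fun l => Matrix.circulant (x i) m l) k) ^ 2 := by
          exact Finset.sum_congr rfl fun k _ => by rw [hrw k]
      _ ≤ (spec Uᵀ * enorm2 (fun l => Matrix.circulant (x i) m l)) ^ 2 :=
          sq_le_enorm2_smul _ _ hmv
      _ = spec Uᵀ ^ 2 * enorm2 (fun l => Matrix.circulant (x i) m l) ^ 2 := by ring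
      _ ≤ 4 * n := by
          have h1 : spec Uᵀ ^ 2 ≤ 4 := by nlinarith [spec_nonneg Uᵀ]
          have h2 : (0:ℝ) ≤ enorm2 (fun l => Matrix.circulant (x i) m l) ^ 2 := sq_nonneg _
          nlinarith
  have hv2 : ∀ i (m : Fin n), (v i m) ^ 2 ≤ 4 * n := by
    intro i m
    have hcs := Finset.sum_mul_sq_le_sq_mul_sq Finset.univ (fun k => (A i) m k) h
    have : v i m = ∑ k, (A i) m k * h k := rfl
    rw [this]
    calc (∑ k, (A i) m k * h k) ^ 2 ≤ (∑ k, (A i) m k ^ 2) * ∑ k, h k ^ 2 := hcs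
      _ ≤ (4 * n) * 1 := by
          rw [hsumh]
          exact mul_le_mul_of_nonneg_right (hrow i m) (by norm_num)
      _ = 4 * n := by ring
  have henormv : ∀ i, enorm2 (v i) ≤ 2 * n := by
    intro i
    calc enorm2 (v i) ≤ spec (A i) * enorm2 h := mulVec_enorm_le _ _
      _ ≤ 2 * n := by rw [hh1, mul_one]; exact specA i
  have hsumv2 : ∀ i, ∑ m, (v i m) ^ 2 ≤ 4 * (n:ℝ) ^ 2 := by
    intro i
    have := sq_le_enorm2_smul (v i) (2 * n) (henormv i)
    calc ∑ m, (v i m) ^ 2 ≤ (2 * (n:ℝ)) ^ 2 := this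
      _ = 4 * (n:ℝ) ^ 2 := by ring
  have hsumv4 : ∀ i, ∑ m, (v i m) ^ 4 ≤ 16 * (n:ℝ) ^ 3 := by
    intro i
    calc ∑ m, (v i m) ^ 4 ≤ ∑ m, (4 * (n:ℝ)) * (v i m) ^ 2 := by
          refine Finset.sum_le_sum fun m _ => ?_
          have := hv2 i m
          nlinarith [sq_nonneg (v i m)]
      _ = (4 * (n:ℝ)) * ∑ m, (v i m) ^ 2 := by rw [Finset.mul_sum]
      _ ≤ (4 * (n:ℝ)) * (4 * (n:ℝ) ^ 2) :=
          mul_le_mul_of_nonneg_left (hsumv2 i) (by positivity)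
      _ = 16 * (n:ℝ) ^ 3 := by ring
  have hsumv6 : ∀ i, ∑ m, ((v i m) ^ 3) ^ 2 ≤ 64 * (n:ℝ) ^ 4 := by
    intro i
    calc ∑ m, ((v i m) ^ 3) ^ 2 ≤ ∑ m, (4 * (n:ℝ)) * (v i m) ^ 4 := by
          refine Finset.sum_le_sum fun m _ => ?_
          have := hv2 i m
          nlinarith [sq_nonneg (v i m), sq_nonneg ((v i m)^2)]
      _ = (4 * (n:ℝ)) * ∑ m, (v i m) ^ 4 := by rw [Finset.mul_sum]
      _ ≤ (4 * (n:ℝ)) * (16 * (n:ℝ) ^ 3) :=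
          mul_le_mul_of_nonneg_left (hsumv4 i) (by positivity)
      _ = 64 * (n:ℝ) ^ 4 := by ring
  -- value bounds
  have hS0 : (0:ℝ) ≤ ∑ i, ∑ j, (v i j) ^ 4 :=
    Finset.sum_nonneg fun i _ => Finset.sum_nonneg fun j _ => by positivity
  have hSle : ∑ i, ∑ j, (v i j) ^ 4 ≤ (N:ℝ) * (16 * (n:ℝ) ^ 3) := by
    calc ∑ i, ∑ j, (v i j) ^ 4 ≤ ∑ _i : Fin N, 16 * (n:ℝ) ^ 3 :=
          Finset.sum_le_sum fun i _ => hsumv4 i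
      _ = (N:ℝ) * (16 * (n:ℝ) ^ 3) := by
          rw [Finset.sum_const, Finset.card_univ, Fintype.card_fin, nsmul_eq_mul]
  have hLdef : Lobj x U h = -(1 / (4 * (N:ℝ))) * ∑ i, ∑ j, (v i j) ^ 4 := rfl
  have hval : -(4 * (n : ℝ) ^ 3) ≤ Lobj x U h ∧ Lobj x U h ≤ 0 := by
    rw [hLdef]
    constructor
    · have key : (1 / (4 * (N:ℝ))) * ((N:ℝ) * (16 * (n:ℝ) ^ 3)) = 4 * (n:ℝ) ^ 3 := by
        field_simp
        ring
      have h1 : (1 / (4 * (N:ℝ))) * (∑ i, ∑ j, (v i j) ^ 4) ≤ 4 * (n:ℝ) ^ 3 := by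
        rw [← key]
        exact mul_le_mul_of_nonneg_left hSle (by positivity)
      linarith
    · have : (0:ℝ) ≤ (1 / (4 * (N:ℝ))) * ∑ i, ∑ j, (v i j) ^ 4 := by positivity
      linarith
  refine ⟨hval, ?_, ?_⟩
  · -- gradient
    rw [egrad_Lobj x U h]
    calc enorm2 (∑ i, (-(1 / (N:ℝ))) • (A i)ᵀ.mulVec (fun j => (v i j) ^ 3))
        ≤ ∑ i, enorm2 ((-(1 / (N:ℝ))) • (A i)ᵀ.mulVec (fun j => (v i j) ^ 3)) :=
          enorm2_sum_le _ _
      _ ≤ ∑ _i : Fin N, (1 / (N:ℝ)) * (16 * (n:ℝ) ^ 3) := by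
          refine Finset.sum_le_sum fun i _ => ?_
          rw [enorm2_smul]
          have habs : |(-(1 / (N:ℝ)))| = 1 / (N:ℝ) := by
            rw [abs_neg, abs_of_pos (by positivity)]
          rw [habs]
          refine mul_le_mul_of_nonneg_left ?_ (by positivity)
          have hw : enorm2 (fun j => (v i j) ^ 3) ≤ 8 * (n:ℝ) ^ 2 := by
            refine enorm2_le_of_sq _ _ (by positivity) ?_
            calc ∑ j, ((v i j) ^ 3) ^ 2 ≤ 64 * (n:ℝ) ^ 4 := hsumv6 i
              _ = (8 * (n:ℝ) ^ 2) ^ 2 := by ring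
          calc enorm2 ((A i)ᵀ.mulVec (fun j => (v i j) ^ 3))
              ≤ spec (A i)ᵀ * enorm2 (fun j => (v i j) ^ 3) := mulVec_enorm_le _ _
            _ ≤ (2 * n) * (8 * (n:ℝ) ^ 2) :=
                mul_le_mul (specAT i) hw (enorm2_nonneg _) (by positivity)
            _ = 16 * (n:ℝ) ^ 3 := by ring
      _ = 16 * (n:ℝ) ^ 3 := by
          rw [Finset.sum_const, Finset.card_univ, Fintype.card_fin, nsmul_eq_mul]
          field_simp
  · -- Hessian
    rw [ehess_Lobj x U h]
    have hDi : ∀ i, spec (Matrix.diagonal (fun m => (v i m) ^ 2)) ≤ 4 * n := by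
      intro i
      refine spec_diagonal_le _ _ (by positivity) fun m => ?_
      have := hv2 i m
      nlinarith [sq_nonneg (v i m)]
    have hMi : ∀ i, spec ((A i)ᵀ * Matrix.diagonal (fun m => (v i m) ^ 2) * A i)
        ≤ 16 * (n:ℝ) ^ 3 := by
      intro i
      calc spec ((A i)ᵀ * Matrix.diagonal (fun m => (v i m) ^ 2) * A i)
          ≤ spec ((A i)ᵀ * Matrix.diagonal (fun m => (v i m) ^ 2)) * spec (A i) :=
            spec_mul_le _ _
        _ ≤ (spec (A i)ᵀ * spec (Matrix.diagonal (fun m => (v i m) ^ 2))) * spec (A i) :=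
            mul_le_mul_of_nonneg_right (spec_mul_le _ _) (spec_nonneg _)
        _ ≤ ((2 * n) * (4 * n)) * (2 * n) := by
            refine mul_le_mul ?_ (specA i) (spec_nonneg _) (by positivity)
            exact mul_le_mul (specAT i) (hDi i) (spec_nonneg _) (by positivity)
        _ = 16 * (n:ℝ) ^ 3 := by ring
    rw [spec_smul]
    have habs : |(-(3 / (N:ℝ)))| = 3 / (N:ℝ) := by
      rw [abs_neg, abs_of_pos (by positivity)]
    rw [habs]
    calc (3 / (N:ℝ)) * spec (∑ i, (A i)ᵀ * Matrix.diagonal (fun m => (v i m) ^ 2) * A i)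
        ≤ (3 / (N:ℝ)) * ((N:ℝ) * (16 * (n:ℝ) ^ 3)) := by
          refine mul_le_mul_of_nonneg_left ?_ (by positivity)
          calc spec (∑ i, (A i)ᵀ * Matrix.diagonal (fun m => (v i m) ^ 2) * A i)
              ≤ ∑ i, spec ((A i)ᵀ * Matrix.diagonal (fun m => (v i m) ^ 2) * A i) :=
                spec_sum_le _ _
            _ ≤ ∑ _i : Fin N, 16 * (n:ℝ) ^ 3 := Finset.sum_le_sum fun i _ => hMi i
            _ = (N:ℝ) * (16 * (n:ℝ) ^ 3) := by
                rw [Finset.sum_const, Finset.card_univ, Fintype.card_fin, nsmul_eq_mul]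
      _ = 48 * (n:ℝ) ^ 3 := by
          field_simp
          ring
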